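/- As x → ∞, ∑_{n : α(n) ≤ x} Λ(n) = (3 log r)/π² · x² + O(x log x), where r = (1+√5)/2. -/

import Mathlib

open Finset ArithmeticFunction Filter Asymptotics

noncomputable def fibAlpha (n : ℕ) : ℕ := sInf {m | 0 < m ∧ n ∣ Nat.fib m}

/-! Since `n ∣ fib m ↔ α(n) ∣ m`, grouping the `n` by their rank splits `log (fib m)` as
`∑_{d ∣ m} g d`, where `g d` is the `Λ`-mass of the `n` with `α(n) = d`. Then Möbius inversion
turns the sum into `∑_{d ≤ x} μ(d) H(x / d)` with
`H(k) = ∑_{e ≤ k} log (fib e) = (log φ / 2) k² + O(k)`, because `fib e ≍ φ ^ e`.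
Hyperbola-type bookkeeping then gives `(log φ / 2) x² ∑_{d ≤ x} μ(d) / d² + O(x log x)`,
and `∑ μ(d) / d² = 1 / ζ(2) = 6 / π²` with a tail of size `O(1 / x)`. -/

open scoped ArithmeticFunction.Moebius ArithmeticFunction.zeta goldenRatio Real

theorem iterate_fibStep_zero_one {R : Type*} [AddMonoidWithOne R] (k : ℕ) :
    (fun p : R × R => (p.2, p.1 + p.2))^[k] (0, 1) = ((Nat.fib k : R), (Nat.fib (k + 1) : R)) := by
  induction k with
  | zero => simp
  | succ k ih => rw [Function.iterate_succ_apply', ih, Nat.fib_add_two, Nat.cast_add]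

-- The step `(a, b) ↦ (b, a + b)` is injective on the finite set `(ℤ/n)²`, hence periodic.
theorem exists_pos_dvd_fib {n : ℕ} (hn : n ≠ 0) : ∃ m, 0 < m ∧ n ∣ Nat.fib m := by
  have : NeZero n := ⟨hn⟩
  have hinj : Function.Injective fun p : ZMod n × ZMod n => (p.2, p.1 + p.2) := by
    intro p q h
    simp only [Prod.mk.injEq] at h
    exact Prod.ext (by simpa [h.1] using h.2) h.1
  obtain ⟨m, hm, hper⟩ := hinj.mem_periodicPts (0, 1)
  refine ⟨m, hm, (ZMod.natCast_eq_zero_iff _ _).mp ?_⟩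
  simpa [Function.IsPeriodicPt, Function.IsFixedPt, iterate_fibStep_zero_one] using
    congrArg Prod.fst hper

theorem fibAlpha_pos {n : ℕ} (hn : n ≠ 0) : 0 < fibAlpha n :=
  (Nat.sInf_mem (exists_pos_dvd_fib hn)).1

theorem dvd_fib_fibAlpha {n : ℕ} (hn : n ≠ 0) : n ∣ Nat.fib (fibAlpha n) :=
  (Nat.sInf_mem (exists_pos_dvd_fib hn)).2

theorem fibAlpha_le {n m : ℕ} (hm : 0 < m) (h : n ∣ Nat.fib m) : fibAlpha n ≤ m :=
  Nat.sInf_le ⟨hm, h⟩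

theorem dvd_fib_iff_fibAlpha_dvd {n : ℕ} (hn : n ≠ 0) (m : ℕ) :
    n ∣ Nat.fib m ↔ fibAlpha n ∣ m := by
  refine ⟨fun h => ?_, fun h => (dvd_fib_fibAlpha hn).trans (Nat.fib_dvd _ _ h)⟩
  rcases Nat.eq_zero_or_pos m with rfl | hm
  · exact dvd_zero _
  have hgcd : n ∣ Nat.fib (m.gcd (fibAlpha n)) := by
    rw [Nat.fib_gcd]; exact Nat.dvd_gcd h (dvd_fib_fibAlpha hn)
  exact Nat.gcd_eq_right_iff_dvd.mp <| le_antisymm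
    (Nat.le_of_dvd (fibAlpha_pos hn) (Nat.gcd_dvd_right _ _))
    (fibAlpha_le (Nat.gcd_pos_of_pos_left _ hm) hgcd)

theorem fib_succ_le_goldenRatio_pow (n : ℕ) : (Nat.fib (n + 1) : ℝ) ≤ φ ^ n := by
  have h := Real.goldenRatio_mul_fib_succ_add_fib n
  rw [pow_succ'] at h
  exact le_of_mul_le_mul_left (by linarith [(Nat.fib n).cast_nonneg (α := ℝ)]) Real.goldenRatio_pos

theorem goldenRatio_pow_le_sq_mul_fib_succ (n : ℕ) : φ ^ (n + 1) ≤ φ ^ 2 * Nat.fib (n + 1) := by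
  have h : (Nat.fib n : ℝ) ≤ Nat.fib (n + 1) := by exact_mod_cast Nat.fib_le_fib_succ
  rw [← Real.goldenRatio_mul_fib_succ_add_fib, Real.goldenRatio_sq]
  linarith

theorem abs_log_fib_sub_le {m : ℕ} (hm : 0 < m) :
    |Real.log (Nat.fib m) - Real.log φ * m| ≤ 2 * Real.log φ := by
  obtain ⟨n, rfl⟩ : ∃ n, m = n + 1 := ⟨m - 1, by omega⟩
  have hF : (0 : ℝ) < Nat.fib (n + 1) := by exact_mod_cast Nat.fib_pos.mpr n.succ_pos
  have hup := Real.log_le_log hF (fib_succ_le_goldenRatio_pow n)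
  have hlow := Real.log_le_log (by positivity) (goldenRatio_pow_le_sq_mul_fib_succ n)
  rw [Real.log_mul (by positivity) hF.ne', Real.log_pow, Real.log_pow] at hlow
  rw [Real.log_pow] at hup
  have := Real.log_pos Real.one_lt_goldenRatio
  push_cast at *
  rw [abs_le]; constructor <;> linarith

theorem mem_filter_divisors_fib_fibAlpha_eq {n d : ℕ} :
    n ∈ {k ∈ (Nat.fib d).divisors | fibAlpha k = d} ↔ n ≠ 0 ∧ fibAlpha n = d := by
  simp only [mem_filter, Nat.mem_divisors]
  constructor
  · rintro ⟨⟨hdvd, hfib⟩, hα⟩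
    exact ⟨ne_zero_of_dvd_ne_zero hfib hdvd, hα⟩
  · rintro ⟨hn, rfl⟩
    exact ⟨⟨dvd_fib_fibAlpha hn, (Nat.fib_pos.mpr (fibAlpha_pos hn)).ne'⟩, rfl⟩

-- `log` of the primitive part of `fib m`: `fib m = ∏_{d ∣ m} exp (fibPrimitiveLog d)`.
noncomputable def fibPrimitiveLog : ArithmeticFunction ℝ :=
  ⟨fun m => ∑ n ∈ (Nat.fib m).divisors with fibAlpha n = m, Λ n, by simp⟩

noncomputable def logFib : ArithmeticFunction ℝ :=
  ⟨fun m => Real.log (Nat.fib m), by simp⟩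

theorem fibPrimitiveLog_apply (m : ℕ) :
    fibPrimitiveLog m = ∑ n ∈ (Nat.fib m).divisors with fibAlpha n = m, Λ n := rfl

theorem fibPrimitiveLog_mul_zeta : fibPrimitiveLog * ζ = logFib := by
  ext m
  rcases Nat.eq_zero_or_pos m with rfl | hm
  · simp
  rw [coe_mul_zeta_apply, show logFib m = Real.log (Nat.fib m) from rfl, ← vonMangoldt_sum]
  symm
  rw [← sum_fiberwise_of_maps_to (g := fibAlpha) (t := m.divisors)]
  · refine sum_congr rfl fun d hd => ?_
    rw [fibPrimitiveLog_apply]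
    congr 1
    ext n
    rw [mem_filter_divisors_fib_fibAlpha_eq, mem_filter, Nat.mem_divisors]
    constructor
    · rintro ⟨⟨hdvd, hfib⟩, hα⟩
      exact ⟨ne_zero_of_dvd_ne_zero hfib hdvd, hα⟩
    · rintro ⟨hn, rfl⟩
      exact ⟨⟨(dvd_fib_fibAlpha hn).trans (Nat.fib_dvd _ _ (Nat.dvd_of_mem_divisors hd)),
        (Nat.fib_pos.mpr hm).ne'⟩, rfl⟩
  · intro n hn
    obtain ⟨hdvd, hfib⟩ := Nat.mem_divisors.mp hn
    exact Nat.mem_divisors.mpr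
      ⟨(dvd_fib_iff_fibAlpha_dvd (ne_zero_of_dvd_ne_zero hfib hdvd) m).mp hdvd, hm.ne'⟩

theorem fibPrimitiveLog_eq_moebius_mul : fibPrimitiveLog = (μ : ArithmeticFunction ℝ) * logFib := by
  rw [← fibPrimitiveLog_mul_zeta, mul_comm, mul_assoc, coe_zeta_mul_coe_moebius, mul_one]

theorem sum_vonMangoldt_fibAlpha_le_eq_sum_fibPrimitiveLog (N : ℕ) :
    ∑ n ∈ (Icc 1 (Nat.fib N)).filter (fun n => fibAlpha n ≤ N), Λ n
      = ∑ m ∈ Ioc 0 N, fibPrimitiveLog m := by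
  rw [← sum_fiberwise_of_maps_to (g := fibAlpha) (t := Ioc 0 N)]
  · refine sum_congr rfl fun d hd => ?_
    rw [fibPrimitiveLog_apply]
    congr 1
    ext n
    rw [mem_filter_divisors_fib_fibAlpha_eq, mem_filter, mem_filter, mem_Icc]
    constructor
    · rintro ⟨⟨⟨hn, -⟩, -⟩, hα⟩
      exact ⟨by omega, hα⟩
    · rintro ⟨hn, rfl⟩
      have hαN := (mem_Ioc.mp hd).2
      exact ⟨⟨⟨Nat.one_le_iff_ne_zero.mpr hn, (Nat.le_of_dvd (Nat.fib_pos.mpr (fibAlpha_pos hn))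
        (dvd_fib_fibAlpha hn)).trans (Nat.fib_mono hαN)⟩, hαN⟩, rfl⟩
  · intro n hn
    simp only [mem_filter, mem_Icc] at hn
    exact mem_Ioc.mpr ⟨fibAlpha_pos (by omega), hn.2⟩

theorem sum_vonMangoldt_fibAlpha_le_eq_sum_moebius (N : ℕ) :
    ∑ n ∈ (Icc 1 (Nat.fib N)).filter (fun n => fibAlpha n ≤ N), Λ n
      = ∑ d ∈ Ioc 0 N, (μ d : ℝ) * ∑ e ∈ Ioc 0 (N / d), Real.log (Nat.fib e) := by
  rw [sum_vonMangoldt_fibAlpha_le_eq_sum_fibPrimitiveLog, fibPrimitiveLog_eq_moebius_mul,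
    sum_Ioc_mul_eq_sum_sum]
  rfl

theorem sum_Ioc_natCast (k : ℕ) : ∑ e ∈ Ioc 0 k, (e : ℝ) = k * (k + 1) / 2 := by
  induction k with
  | zero => simp
  | succ k ih =>
    rw [sum_Ioc_succ_top k.zero_le, ih]
    push_cast
    ring

theorem abs_sum_Ioc_sub_half_mul_sq_le {a : ℕ → ℝ} {c B : ℝ}
    (ha : ∀ e, 0 < e → |a e - c * e| ≤ B) (k : ℕ) :
    |∑ e ∈ Ioc 0 k, a e - c / 2 * k ^ 2| ≤ (B + |c| / 2) * k := by
  have hsplit : ∑ e ∈ Ioc 0 k, a e - c / 2 * k ^ 2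
      = ∑ e ∈ Ioc 0 k, (a e - c * e) + c / 2 * k := by
    rw [sum_sub_distrib, ← mul_sum, sum_Ioc_natCast]
    ring
  have hsum : |∑ e ∈ Ioc 0 k, (a e - c * e)| ≤ B * k :=
    calc |∑ e ∈ Ioc 0 k, (a e - c * e)| ≤ ∑ e ∈ Ioc 0 k, |a e - c * e| := abs_sum_le_sum_abs _ _
      _ ≤ ∑ _e ∈ Ioc 0 k, B := sum_le_sum fun e he => ha e (mem_Ioc.mp he).1
      _ = B * k := by simp [mul_comm]
  calc |∑ e ∈ Ioc 0 k, a e - c / 2 * k ^ 2|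
      ≤ |∑ e ∈ Ioc 0 k, (a e - c * e)| + |c / 2 * k| := hsplit ▸ abs_add_le _ _
    _ ≤ B * k + |c| / 2 * k := by
        rw [abs_mul, abs_div, Nat.abs_cast, abs_two]
        linarith
    _ = (B + |c| / 2) * k := by ring

theorem abs_sq_sub_sq_le_two_mul {x y : ℝ} (hy : 0 ≤ y) (hyx : y ≤ x) (hxy : x ≤ y + 1) :
    |y ^ 2 - x ^ 2| ≤ 2 * x := by
  rw [abs_le]
  constructor <;> nlinarith

theorem abs_mul_apply_div_sub_le {a : ℝ} {f : ℕ → ℝ} {c C : ℝ} (ha : |a| ≤ 1)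
    (hf : ∀ k, |f k - c * k ^ 2| ≤ C * k) {N d : ℕ} (hd : 0 < d) :
    |a * f (N / d) - c * N ^ 2 * (a / d ^ 2)| ≤ (C + 2 * |c|) * N * (d : ℝ)⁻¹ := by
  have hC : 0 ≤ C := (abs_nonneg _).trans (by simpa using hf 1)
  have hd' : (0 : ℝ) < d := by exact_mod_cast hd
  have hlt : N < (N / d + 1) * d := by
    rw [mul_comm]; exact Nat.lt_mul_div_succ N hd
  have hxy : (N : ℝ) / d ≤ ((N / d : ℕ) : ℝ) + 1 := by
    rw [div_le_iff₀ hd']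
    exact_mod_cast hlt.le
  have hyx : ((N / d : ℕ) : ℝ) ≤ (N : ℝ) / d := Nat.cast_div_le
  set y : ℝ := ((N / d : ℕ) : ℝ)
  set x : ℝ := (N : ℝ) / d
  have hdecomp : a * f (N / d) - c * N ^ 2 * (a / d ^ 2)
      = a * ((f (N / d) - c * y ^ 2) + c * (y ^ 2 - x ^ 2)) := by
    simp only [x]; field_simp; ring
  calc |a * f (N / d) - c * N ^ 2 * (a / d ^ 2)|
      ≤ 1 * (C * y + |c| * (2 * x)) := by
        rw [hdecomp, abs_mul]
        refine mul_le_mul ha ?_ (abs_nonneg _) zero_le_one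
        refine (abs_add_le _ _).trans (add_le_add (hf _) ?_)
        rw [abs_mul]
        exact mul_le_mul_of_nonneg_left
          (abs_sq_sub_sq_le_two_mul (Nat.cast_nonneg _) hyx hxy) (abs_nonneg c)
    _ ≤ (C + 2 * |c|) * N * (d : ℝ)⁻¹ := by
        have := mul_le_mul_of_nonneg_left hyx hC
        simp only [x] at this ⊢
        rw [div_eq_mul_inv] at this ⊢
        nlinarith [abs_nonneg c]

theorem abs_sum_Ioc_mul_div_sub_le {a f : ℕ → ℝ} {c C : ℝ} (ha : ∀ d, |a d| ≤ 1)
    (hf : ∀ k, |f k - c * k ^ 2| ≤ C * k) (N : ℕ) :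
    |∑ d ∈ Ioc 0 N, a d * f (N / d) - c * N ^ 2 * ∑ d ∈ Ioc 0 N, a d / d ^ 2|
      ≤ (C + 2 * |c|) * N * (1 + Real.log N) := by
  have hC : 0 ≤ C := (abs_nonneg _).trans (by simpa using hf 1)
  have hharm : ∑ d ∈ Ioc 0 N, (d : ℝ)⁻¹ ≤ 1 + Real.log N := by
    have := harmonic_le_one_add_log N
    push_cast [harmonic_eq_sum_Icc] at this
    exact this
  calc |∑ d ∈ Ioc 0 N, a d * f (N / d) - c * N ^ 2 * ∑ d ∈ Ioc 0 N, a d / d ^ 2|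
      = |∑ d ∈ Ioc 0 N, (a d * f (N / d) - c * N ^ 2 * (a d / d ^ 2))| := by
        rw [mul_sum, sum_sub_distrib]
    _ ≤ ∑ d ∈ Ioc 0 N, (C + 2 * |c|) * N * (d : ℝ)⁻¹ :=
        (abs_sum_le_sum_abs _ _).trans (sum_le_sum fun d hd =>
          abs_mul_apply_div_sub_le (ha d) hf (mem_Ioc.mp hd).1)
    _ ≤ (C + 2 * |c|) * N * (1 + Real.log N) := by
        rw [← mul_sum]
        exact mul_le_mul_of_nonneg_left hharm (by positivity)

theorem abs_sum_Ioc_div_sq_sub_le {a : ℕ → ℝ} {s : ℝ} (ha : ∀ d, |a d| ≤ 1)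
    (hs : HasSum (fun d : ℕ => a d / d ^ 2) s) (N : ℕ) :
    |∑ d ∈ Ioc 0 N, a d / d ^ 2 - s| ≤ 2 / (N + 1) := by
  have hpartial : Tendsto (fun M => ∑ d ∈ Ioc 0 M, a d / d ^ 2) atTop (nhds s) := by
    refine (hs.tendsto_sum_nat.comp (tendsto_add_atTop_nat 1)).congr fun M => ?_
    rw [Function.comp_apply, range_eq_Ico, sum_eq_sum_Ico_succ_bot M.succ_pos, Nat.cast_zero,
      zero_pow two_ne_zero, div_zero, zero_add]
    rfl
  refine le_of_tendsto ((tendsto_const_nhds.sub hpartial).abs)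
    (eventually_atTop.mpr ⟨N, fun M hM => ?_⟩)
  rw [← sum_Ioc_consecutive _ N.zero_le hM, sub_add_cancel_left, abs_neg,
    ← Ioo_add_one_right_eq_Ioc]
  calc |∑ d ∈ Ioo N (M + 1), a d / d ^ 2|
      ≤ ∑ d ∈ Ioo N (M + 1), ((d : ℝ) ^ 2)⁻¹ := by
        refine (abs_sum_le_sum_abs _ _).trans (sum_le_sum fun d _ => ?_)
        rw [abs_div, abs_of_nonneg (sq_nonneg (d : ℝ)), ← one_div]
        exact div_le_div_of_nonneg_right (ha d) (sq_nonneg _)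
    _ ≤ 2 / (N + 1) := sum_Ioo_inv_sq_le N (M + 1)

theorem hasSum_moebius_div_sq : HasSum (fun d : ℕ => (μ d : ℝ) / d ^ 2) (6 / π ^ 2) := by
  have h2 : 1 < (2 : ℂ).re := by norm_num
  have hL : LSeries (fun n => (μ n : ℂ)) 2 = 6 / (π : ℂ) ^ 2 := by
    have h := LSeries_zeta_mul_Lseries_moebius h2
    rw [LSeries_zeta_eq_riemannZeta h2, riemannZeta_two] at h
    have hπ : (π : ℂ) ≠ 0 := Complex.ofReal_ne_zero.mpr Real.pi_ne_zero
    field_simp at h ⊢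
    linear_combination h
  have hsum := (LSeriesSummable_moebius_iff.mpr h2).LSeriesHasSum
  rw [hL, LSeriesHasSum] at hsum
  rw [← Complex.hasSum_ofReal]
  convert hsum using 1
  · ext n
    rcases eq_or_ne n 0 with rfl | hn
    · simp
    rw [LSeries.term_of_ne_zero hn, show (2 : ℂ) = ((2 : ℕ) : ℂ) by norm_num, Complex.cpow_natCast]
    push_cast
    rfl
  · push_cast
    rfl

theorem sum_Ioc_mul_div_sub_isBigO {a f : ℕ → ℝ} {c C s : ℝ} (ha : ∀ d, |a d| ≤ 1)
    (hs : HasSum (fun d : ℕ => a d / d ^ 2) s) (hf : ∀ k, |f k - c * k ^ 2| ≤ C * k) :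
    (fun N : ℕ => ∑ d ∈ Ioc 0 N, a d * f (N / d) - c * s * N ^ 2)
      =O[atTop] fun N : ℕ => N * (1 + Real.log N) := by
  refine IsBigO.of_bound (C + 4 * |c|) (Eventually.of_forall fun N => ?_)
  set S := ∑ d ∈ Ioc 0 N, a d / d ^ 2
  have hmain := abs_sum_Ioc_mul_div_sub_le ha hf N
  have htail := abs_sum_Ioc_div_sq_sub_le ha hs N
  have hlog := Real.log_natCast_nonneg N
  have hN : (N : ℝ) ^ 2 * (2 / (N + 1)) ≤ 2 * N * (1 + Real.log N) := by
    rw [mul_div_assoc', div_le_iff₀ (by positivity)]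
    nlinarith
  rw [Real.norm_eq_abs, Real.norm_eq_abs,
    abs_of_nonneg (a := (N : ℝ) * (1 + Real.log N)) (by positivity)]
  calc |∑ d ∈ Ioc 0 N, a d * f (N / d) - c * s * N ^ 2|
      = |(∑ d ∈ Ioc 0 N, a d * f (N / d) - c * N ^ 2 * S) + c * N ^ 2 * (S - s)| := by ring_nf
    _ ≤ (C + 2 * |c|) * N * (1 + Real.log N) + |c| * (N ^ 2 * (2 / (N + 1))) := by
        refine (abs_add_le _ _).trans (add_le_add hmain ?_)
        rw [abs_mul, abs_mul, abs_of_nonneg (sq_nonneg (N : ℝ)), mul_assoc]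
        exact mul_le_mul_of_nonneg_left (mul_le_mul_of_nonneg_left htail (by positivity))
          (abs_nonneg c)
    _ ≤ (C + 4 * |c|) * (N * (1 + Real.log N)) := by
        nlinarith [mul_le_mul_of_nonneg_left hN (abs_nonneg c)]

theorem abs_sum_log_fib_sub_le (k : ℕ) :
    |∑ e ∈ Ioc 0 k, Real.log (Nat.fib e) - Real.log φ / 2 * k ^ 2| ≤ 5 / 2 * Real.log φ * k :=
  calc _ ≤ (2 * Real.log φ + |Real.log φ| / 2) * k :=
        abs_sum_Ioc_sub_half_mul_sq_le (fun _ he => abs_log_fib_sub_le he) k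
    _ = 5 / 2 * Real.log φ * k := by
        rw [abs_of_pos (Real.log_pos Real.one_lt_goldenRatio)]; ring

theorem sum_vonMangoldt_fibAlpha_le_sub_isBigO :
    (fun N : ℕ => ∑ n ∈ (Icc 1 (Nat.fib N)).filter (fun n => fibAlpha n ≤ N), Λ n
        - 3 * Real.log φ / π ^ 2 * N ^ 2) =O[atTop] fun N : ℕ => N * (1 + Real.log N) := by
  have hμ : ∀ d, |(μ d : ℝ)| ≤ 1 := fun d => by exact_mod_cast abs_moebius_le_one
  refine (sum_Ioc_mul_div_sub_isBigO hμ hasSum_moebius_div_sq abs_sum_log_fib_sub_le).congr_left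
    fun N => ?_
  rw [sum_vonMangoldt_fibAlpha_le_eq_sum_moebius]
  ring

theorem floor_mul_one_add_log_floor_isBigO :
    (fun x : ℝ => (⌊x⌋₊ : ℝ) * (1 + Real.log ⌊x⌋₊)) =O[atTop] fun x => x * Real.log x := by
  refine IsBigO.of_bound 2 ?_
  filter_upwards [eventually_ge_atTop 1, Real.tendsto_log_atTop.eventually_ge_atTop 1]
    with x hx hlog
  have hfloor : (1 : ℝ) ≤ ⌊x⌋₊ := by exact_mod_cast Nat.one_le_floor_iff x |>.mpr hx
  have hle : (⌊x⌋₊ : ℝ) ≤ x := Nat.floor_le (by linarith)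
  have hlogle : Real.log ⌊x⌋₊ ≤ Real.log x := Real.log_le_log (by linarith) hle
  have := Real.log_nonneg hfloor
  rw [Real.norm_eq_abs, Real.norm_eq_abs, abs_of_nonneg (by positivity),
    abs_of_nonneg (by nlinarith)]
  nlinarith

theorem floor_sq_sub_sq_isBigO :
    (fun x : ℝ => (⌊x⌋₊ : ℝ) ^ 2 - x ^ 2) =O[atTop] fun x => x * Real.log x := by
  refine IsBigO.of_bound 2 ?_
  filter_upwards [eventually_ge_atTop 0, Real.tendsto_log_atTop.eventually_ge_atTop 1]
    with x hx hlog
  rw [Real.norm_eq_abs, Real.norm_eq_abs, abs_of_nonneg (a := x * Real.log x) (by nlinarith)]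
  refine (abs_sq_sub_sq_le_two_mul (Nat.cast_nonneg _) (Nat.floor_le hx)
    (Nat.lt_floor_add_one x).le).trans ?_
  nlinarith

theorem vonMangoldt_sum_alpha_asymp :
    (fun x : ℝ =>
        (∑ n ∈ (Icc 1 (Nat.fib ⌊x⌋₊)).filter (fun n => fibAlpha n ≤ ⌊x⌋₊), Λ n)
          - 3 * Real.log ((1 + Real.sqrt 5) / 2) / Real.pi ^ 2 * x ^ 2)
      =O[atTop] fun x : ℝ => x * Real.log x := by
  have hfloor := ((sum_vonMangoldt_fibAlpha_le_sub_isBigO.comp_tendsto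
    tendsto_nat_floor_atTop).trans floor_mul_one_add_log_floor_isBigO).add
    (floor_sq_sub_sq_isBigO.const_mul_left (3 * Real.log φ / π ^ 2))
  refine hfloor.congr_left fun x => ?_
  simp only [Function.comp_apply, Real.goldenRatio]
  ring
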